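/- If G is a connected graph with γ_P(G) = Z(G), and H is a connected graph with γ(H) = 1 (i.e., H has a dominating vertex), then γ_P(G □ H) = Z(G). -/

import Mathlib

namespace PaperPD

open SimpleGraph

variable {V : Type} {W : Type}

/-- Observation process for power domination on a simple graph. -/
inductive Observed (G : SimpleGraph V) (S : Set V) : V → Prop
  | mem : ∀ v ∈ S, Observed G S v
  | dom : ∀ u v, u ∈ S → G.Adj u v → Observed G S v
  | prop : ∀ u v, Observed G S u → G.Adj u v →
      (∀ w, G.Adj u w → w ≠ v → Observed G S w) → Observed G S v

/-- `S` is a power dominating set of `G`. -/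
def IsPDS (G : SimpleGraph V) (S : Set V) : Prop := ∀ v, Observed G S v

/-- Power domination number. -/
noncomputable def pdNum (G : SimpleGraph V) [Fintype V] : ℕ :=
  sInf {n | ∃ S : Finset V, S.card = n ∧ IsPDS G ↑S}

/-- Zero forcing process. -/
inductive Forced (G : SimpleGraph V) (S : Set V) : V → Prop
  | mem : ∀ v ∈ S, Forced G S v
  | prop : ∀ u v, Forced G S u → G.Adj u v →
      (∀ w, G.Adj u w → w ≠ v → Forced G S w) → Forced G S v

/-- Zero forcing number. -/
noncomputable def zNum (G : SimpleGraph V) [Fintype V] : ℕ :=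
  sInf {n | ∃ S : Finset V, S.card = n ∧ ∀ v, Forced G S v}

/-- Domination number. -/
noncomputable def domNum (G : SimpleGraph V) [Fintype V] : ℕ :=
  sInf {n | ∃ S : Finset V, S.card = n ∧ ∀ v, ∃ u ∈ S, v = u ∨ G.Adj u v}

/-- No induced `K_{1,3}`. -/
def ClawFree (G : SimpleGraph V) : Prop :=
  ∀ x a b c : V, a ≠ b → a ≠ c → b ≠ c →
    G.Adj x a → G.Adj x b → G.Adj x c →
    ¬ G.Adj a b → ¬ G.Adj a c → ¬ G.Adj b c → False

/-- No induced `K₄` minus an edge. -/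
def DiamondFree (G : SimpleGraph V) : Prop :=
  ∀ a b c d : V, a ≠ b → a ≠ c → a ≠ d → b ≠ c → b ≠ d → c ≠ d →
    G.Adj a b → G.Adj a c → G.Adj b c → G.Adj b d → G.Adj c d →
    ¬ G.Adj a d → False

/-- A leaf: a vertex with exactly one neighbor. -/
def IsLeaf (G : SimpleGraph V) (v : V) : Prop := ∃! u, G.Adj v u

/-- A strong support vertex: adjacent to at least two leaves. -/
def IsStrongSupport (G : SimpleGraph V) (x : V) : Prop :=
  ∃ a b, a ≠ b ∧ G.Adj x a ∧ G.Adj x b ∧ IsLeaf G a ∧ IsLeaf G b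

/-- Number of strong support vertices. -/
noncomputable def ssCount (G : SimpleGraph V) : ℕ :=
  Nat.card {v // IsStrongSupport G v}

/-- Connected with no bridges. -/
def TwoEdgeConnected (G : SimpleGraph V) : Prop :=
  G.Connected ∧ ∀ e, ¬ G.IsBridge e

/-- A loopless multigraph, given by symmetric edge multiplicities. -/
structure Multigraph (W : Type) where
  mult : W → W → ℕ
  symm : ∀ u v, mult u v = mult v u
  loopless : ∀ v, mult v v = 0

/-- Underlying simple graph of a multigraph. -/
def Multigraph.toSimple (M : Multigraph W) : SimpleGraph W where
  Adj u v := u ≠ v ∧ 0 < M.mult u v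
  symm := by refine ⟨?_⟩; intro u v h; exact ⟨h.1.symm, by rw [M.symm]; exact h.2⟩
  loopless := by refine ⟨?_⟩; intro v h; exact h.1 rfl

/-- Degree of a vertex in a multigraph (counting multiplicities). -/
def Multigraph.degree [Fintype W] (M : Multigraph W) (v : W) : ℕ :=
  ∑ u, M.mult v u

/-- Bridgeless multigraph: no single edge is a cut edge (a parallel edge
is never a bridge). -/
def Multigraph.Bridgeless (M : Multigraph W) : Prop :=
  ∀ u v, M.mult u v = 1 → ¬ M.toSimple.IsBridge s(u, v)

/-- A 2-factor of a multigraph, given by sub-multiplicities. -/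
def Multigraph.IsTwoFactor [Fintype W] (M : Multigraph W) (f : W → W → ℕ) : Prop :=
  (∀ u v, f u v ≤ M.mult u v) ∧ (∀ u v, f u v = f v u) ∧ (∀ v, ∑ u, f v u = 2)

/-- Observation process for power domination on a multigraph: propagation
only happens along single edges. -/
inductive MObserved (M : Multigraph W) (S : Set W) : W → Prop
  | mem : ∀ v ∈ S, MObserved M S v
  | dom : ∀ u v, u ∈ S → 0 < M.mult u v → MObserved M S v
  | prop : ∀ u v, MObserved M S u → M.mult u v = 1 →
      (∀ w, 0 < M.mult u w → w ≠ v → MObserved M S w) → MObserved M S v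

/-- Power domination number of a multigraph. -/
noncomputable def mpdNum (M : Multigraph W) [Fintype W] : ℕ :=
  sInf {n | ∃ S : Finset W, S.card = n ∧ ∀ v, MObserved M ↑S v}


/-! Projecting a power dominating set of `G □ H` to its first coordinates gives a power
dominating set of `G`, so `γ_P(G) ≤ γ_P(G □ H)`. Conversely, if `Z` is a zero forcing set of `G`
and `D` dominates `H`, then `Z × D` power dominates `G □ H`: the domination step observes every
`H`-fiber over `Z`, and each force `u → v` of `G` can then be replayed in every `G`-layer,
because the remaining neighbours of `(u, h)` lie in the `H`-fiber of `u`, which is already observed.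
Hence `γ_P(G □ H) ≤ Z(G) γ(H)`, and the two bounds meet when `γ_P(G) = Z(G)` and `γ(H) = 1`. -/

lemma exists_card_eq_sInf {α : Type} [Fintype α] (P : Finset α → Prop) (huniv : P Finset.univ) :
    ∃ S : Finset α, S.card = sInf {n | ∃ S : Finset α, S.card = n ∧ P S} ∧ P S :=
  Nat.sInf_mem (s := {n | ∃ S : Finset α, S.card = n ∧ P S}) ⟨_, _, rfl, huniv⟩

lemma nonempty_of_domNum_pos [Fintype W] {H : SimpleGraph W} (h : 0 < domNum H) : Nonempty W := by
  by_contra hW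
  rw [not_nonempty_iff] at hW
  have : domNum H = 0 := by
    unfold domNum
    exact Nat.sInf_eq_zero.mpr (.inl ⟨∅, rfl, fun v => isEmptyElim v⟩)
  omega

lemma Observed.fst_boxProd {G : SimpleGraph V} {H : SimpleGraph W} {S : Set (V × W)}
    {x : V × W} (hx : Observed (G □ H) S x) : Observed G (Prod.fst '' S) x.1 := by
  induction hx with
  | mem v hv => exact .mem v.1 ⟨v, hv, rfl⟩
  | dom u v hu huv =>
    rcases huv with ⟨hG, -⟩ | ⟨-, hfst⟩
    · exact .dom u.1 v.1 ⟨u, hu, rfl⟩ hG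
    · exact hfst ▸ .mem u.1 ⟨u, hu, rfl⟩
  | prop u v _ huv _ ihu ihnbrs =>
    rcases huv with ⟨hG, -⟩ | ⟨-, hfst⟩
    · refine .prop u.1 v.1 ihu hG fun x hx hxv => ?_
      exact ihnbrs (x, u.2) (boxProd_adj_left.mpr hx) fun h => hxv (by rw [← h])
    · exact hfst ▸ ihu

lemma IsPDS.image_fst [Nonempty W] {G : SimpleGraph V} {H : SimpleGraph W} {S : Set (V × W)}
    (hS : IsPDS (G □ H) S) : IsPDS G (Prod.fst '' S) := fun v =>
  (hS (v, Classical.arbitrary W)).fst_boxProd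

lemma pdNum_le_pdNum_boxProd [Fintype V] [Fintype W] [Nonempty W]
    (G : SimpleGraph V) (H : SimpleGraph W) : pdNum G ≤ pdNum (G □ H) := by
  classical
  obtain ⟨S, hcard, hS⟩ := exists_card_eq_sInf (fun S : Finset (V × W) => IsPDS (G □ H) ↑S)
    fun v => .mem v (by simp)
  have hpds : IsPDS G ↑(S.image Prod.fst) := by
    rw [Finset.coe_image]
    exact hS.image_fst
  calc pdNum G ≤ (S.image Prod.fst).card := Nat.sInf_le ⟨_, rfl, hpds⟩
    _ ≤ S.card := Finset.card_image_le
    _ = pdNum (G □ H) := hcard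

lemma Forced.observed_boxProd {G : SimpleGraph V} {H : SimpleGraph W} {Z : Set V} {D : Set W}
    (hD : ∀ h, ∃ d ∈ D, h = d ∨ H.Adj d h) {g : V} (hg : Forced G Z g) (h : W) :
    Observed (G □ H) (Z ×ˢ D) (g, h) := by
  induction hg generalizing h with
  | mem v hv =>
    obtain ⟨d, hd, rfl | hdh⟩ := hD h
    · exact .mem _ ⟨hv, hd⟩
    · exact .dom (v, d) (v, h) ⟨hv, hd⟩ (boxProd_adj_right.mpr hdh)
  | prop u v _ huv _ ihu ihnbrs =>
    refine .prop (u, h) (v, h) (ihu h) (boxProd_adj_left.mpr huv) ?_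
    rintro ⟨x, k⟩ hadj hne
    rcases hadj with ⟨hG, rfl⟩ | ⟨-, rfl⟩
    · exact ihnbrs x hG (fun hxv => hne (by rw [hxv])) _
    · exact ihu k

lemma pdNum_boxProd_le_zNum_mul_domNum [Fintype V] [Fintype W]
    (G : SimpleGraph V) (H : SimpleGraph W) : pdNum (G □ H) ≤ zNum G * domNum H := by
  obtain ⟨Z, hZcard, hZ⟩ := exists_card_eq_sInf (fun S : Finset V => ∀ v, Forced G ↑S v)
    fun v => .mem v (by simp)
  obtain ⟨D, hDcard, hD⟩ :=
    exists_card_eq_sInf (fun S : Finset W => ∀ v, ∃ u ∈ S, v = u ∨ H.Adj u v)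
      fun v => ⟨v, Finset.mem_univ v, .inl rfl⟩
  have hpds : IsPDS (G □ H) ↑(Z ×ˢ D) := by
    rintro ⟨g, h⟩
    rw [Finset.coe_product]
    exact (hZ g).observed_boxProd hD h
  calc pdNum (G □ H) ≤ (Z ×ˢ D).card := Nat.sInf_le ⟨_, rfl, hpds⟩
    _ = zNum G * domNum H := by rw [Finset.card_product, hZcard, hDcard]; rfl

theorem stmt15_general {V W : Type} [Fintype V] [Fintype W]
    (G : SimpleGraph V) (H : SimpleGraph W)
    (he : pdNum G = zNum G) (hdom : domNum H = 1) :
    pdNum (G.boxProd H) = zNum G := by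
  have : Nonempty W := nonempty_of_domNum_pos (hdom ▸ Nat.one_pos)
  apply le_antisymm
  · simpa [hdom] using pdNum_boxProd_le_zNum_mul_domNum G H
  · exact he ▸ pdNum_le_pdNum_boxProd G H

theorem stmt15 {V W : Type} [Fintype V] [Fintype W]
    (G : SimpleGraph V) (H : SimpleGraph W)
    (hG : G.Connected) (hH : H.Connected)
    (he : pdNum G = zNum G) (hdom : domNum H = 1) :
    pdNum (G.boxProd H) = zNum G :=
  stmt15_general G H he hdom

end PaperPD
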